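/- arXiv:2404.19422 — 5 statements merged into one kernel-verified Lean document; each statement's English description precedes it below -/
import Mathlib

section
/- If there exists a time-respecting path from vertex s to vertex z that departs at time t and goes through route r, then there exists a useful dominating path from s to z that departs at time t and goes through route r. -/
/-- A temporal edge with tail, head, departure time and arrival time. -/
structure TEdge (V : Type) where
  tail : V
  head : V
  dep : ℕ
  arr : ℕ

/-- A temporal graph: a set of temporal edges, each with arrival strictly after departure. -/
structure TGraph (V : Type) where
  edges : Set (TEdge V)
  valid : ∀ e ∈ edges, e.dep < e.arr

variable {V : Type}

/-- Time-respecting path: nonempty sequence of edges of `G`, consecutive edges share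
endpoints and each edge departs no earlier than the previous edge arrives. -/
def TRP (G : TGraph V) (p : List (TEdge V)) : Prop :=
  p ≠ [] ∧ (∀ e ∈ p, e ∈ G.edges) ∧
    List.Chain' (fun e f => e.head = f.tail ∧ e.arr ≤ f.dep) p

/-- Departure time of a path (departure of its first edge). -/
def pdep (p : List (TEdge V)) : ℕ := (p.head?.elim 0 TEdge.dep)

/-- Arrival time of a path (arrival of its last edge). -/
def parr (p : List (TEdge V)) : ℕ := (p.getLast?.elim 0 TEdge.arr)

/-- Start vertex of a path. -/
def startV (p : List (TEdge V)) : Option V := p.head?.map TEdge.tail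

/-- End vertex of a path. -/
def endV (p : List (TEdge V)) : Option V := p.getLast?.map TEdge.head

/-- The route (sequence of vertices) a path goes through. -/
def routeOf (p : List (TEdge V)) : List V :=
  p.map TEdge.tail ++ (p.getLast?.elim [] fun e => [e.head])

/-- `ℙ(s,z,r,t)`: time-respecting paths from `s` to `z` through route `r` departing at `t`. -/
def PathsIn (G : TGraph V) (s z : V) (r : List V) (t : ℕ) : Set (List (TEdge V)) :=
  {p | TRP G p ∧ startV p = some s ∧ endV p = some z ∧ routeOf p = r ∧ pdep p = t}

/-- Dominating path in `ℙ(s,z,r,t)`. -/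
def DominatingIn (G : TGraph V) (s z : V) (r : List V) (t : ℕ) (p : List (TEdge V)) : Prop :=
  p ∈ PathsIn G s z r t ∧ ∀ q ∈ PathsIn G s z r t, parr p ≤ parr q

/-- A path is dominating with respect to its own start vertex, route and departure time. -/
def DomSelf (G : TGraph V) (p : List (TEdge V)) : Prop :=
  TRP G p ∧ ∀ q, TRP G q → startV q = startV p → routeOf q = routeOf p →
    pdep q = pdep p → parr p ≤ parr q

/-- Useful dominating path: every (nonempty) prefix is dominating on its own route
and departure time. -/
def UsefulDom (G : TGraph V) (p : List (TEdge V)) : Prop :=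
  ∀ j, 1 ≤ j → j ≤ p.length → DomSelf G (p.take j)

/-- The edge relation of the edge-scan-dependency graph: `v_e → v_f` iff `f` departs
from the head of `e` no earlier than `e` arrives and no parallel edge with the same
endpoints departs no earlier than `arr e` and arrives strictly before `f`. -/
def ESDGAdj (G : TGraph V) (e f : TEdge V) : Prop :=
  e ∈ G.edges ∧ f ∈ G.edges ∧ e.head = f.tail ∧ e.arr ≤ f.dep ∧
    ¬ ∃ g ∈ G.edges, g.tail = f.tail ∧ g.head = f.head ∧ e.arr ≤ g.dep ∧ g.arr < f.arr

/-- A directed path in the ESDG, given as the corresponding sequence of temporal edges. -/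
def ESDGPath (G : TGraph V) (p : List (TEdge V)) : Prop :=
  p ≠ [] ∧ (∀ e ∈ p, e ∈ G.edges) ∧ List.Chain' (ESDGAdj G) p

/-- Earliest arrival path from `s` to `z` with ready time `rt`. -/
def EAPath (G : TGraph V) (s z : V) (rt : ℕ) (p : List (TEdge V)) : Prop :=
  TRP G p ∧ startV p = some s ∧ endV p = some z ∧ rt ≤ pdep p ∧
    ∀ q, TRP G q → startV q = some s → endV q = some z → rt ≤ pdep q → parr p ≤ parr q

/-- Fastest path from `s` to `z`: minimizes journey time `arr - dep`. -/
def FastestPath (G : TGraph V) (s z : V) (p : List (TEdge V)) : Prop :=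
  TRP G p ∧ startV p = some s ∧ endV p = some z ∧
    ∀ q, TRP G q → startV q = some s → endV q = some z →
      parr p - pdep p ≤ parr q - pdep q


/-!
Build the path edge by edge along the route. Having a useful dominating prefix `Q`, append, among
the edges from the end of `Q` to the next vertex of the route that depart no earlier than `parr Q`,
one that arrives first (for the first edge: among the parallel edges departing exactly at `t`).
A competitor on the same route splits into a prefix on the route of `Q`, which by domination
arrives no earlier than `Q`, and a last edge, which is therefore one of the candidates.
-/

section Paths

variable {G : TGraph V} {xs p q : List (TEdge V)} {e : TEdge V}

@[simp]
lemma routeOf_singleton (e : TEdge V) : routeOf [e] = [e.tail, e.head] := by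
  simp [routeOf]

@[simp]
lemma parr_append_singleton (xs : List (TEdge V)) (e : TEdge V) : parr (xs ++ [e]) = e.arr := by
  simp [parr]

lemma pdep_append_singleton (hxs : xs ≠ []) : pdep (xs ++ [e]) = pdep xs := by
  obtain ⟨a, l, rfl⟩ := List.exists_cons_of_ne_nil hxs
  simp [pdep]

lemma length_routeOf (hp : p ≠ []) : (routeOf p).length = p.length + 1 := by
  simp [routeOf, List.getLast?_eq_some_getLast hp]

lemma startV_eq_head?_routeOf (p : List (TEdge V)) : startV p = (routeOf p).head? := by
  cases p <;> simp [startV, routeOf]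

lemma endV_eq_getLast?_routeOf (p : List (TEdge V)) : endV p = (routeOf p).getLast? := by
  rcases List.eq_nil_or_concat p with rfl | ⟨xs, e, rfl⟩ <;> simp [endV, routeOf]

lemma routeOf_append_singleton (h : endV xs = some e.tail) :
    routeOf (xs ++ [e]) = routeOf xs ++ [e.head] := by
  rcases List.eq_nil_or_concat xs with rfl | ⟨ys, d, rfl⟩
  · simp [endV] at h
  · simp only [endV, List.concat_eq_append, List.getLast?_concat, Option.map_some,
      Option.some.injEq] at h
    simp [routeOf, h]

lemma trp_iff : TRP G p ↔ p ≠ [] ∧ (∀ e ∈ p, e ∈ G.edges) ∧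
    p.IsChain (fun e f => e.head = f.tail ∧ e.arr ≤ f.dep) :=
  Iff.rfl

lemma trp_singleton_iff : TRP G [e] ↔ e ∈ G.edges := by
  simp [trp_iff]

lemma trp_append_singleton_iff (hxs : xs ≠ []) :
    TRP G (xs ++ [e]) ↔ TRP G xs ∧ e ∈ G.edges ∧ endV xs = some e.tail ∧ parr xs ≤ e.dep := by
  simp [trp_iff, List.isChain_append, endV, parr, List.getLast?_eq_some_getLast hxs, hxs,
    or_imp, forall_and, and_assoc, and_left_comm]

lemma mem_pathsIn_of_routeOf_eq {s z : V} {r : List V} {t : ℕ} (hp : p ∈ PathsIn G s z r t)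
    (hq : TRP G q) (hroute : routeOf q = routeOf p) (hdep : pdep q = pdep p) :
    q ∈ PathsIn G s z r t := by
  obtain ⟨-, hs, hz, hr, ht⟩ := hp
  refine ⟨hq, ?_, ?_, hroute.trans hr, hdep.trans ht⟩
  · rw [startV_eq_head?_routeOf, hroute, ← startV_eq_head?_routeOf, hs]
  · rw [endV_eq_getLast?_routeOf, hroute, ← endV_eq_getLast?_routeOf, hz]

end Paths

lemma exists_arr_min {S : Set (TEdge V)} (hS : S.Nonempty) : ∃ f ∈ S, ∀ g ∈ S, f.arr ≤ g.arr := by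
  obtain ⟨f, hf, hmin⟩ := (InvImage.wf TEdge.arr wellFounded_lt).has_min S hS
  exact ⟨f, hf, fun g hg => not_lt.1 (hmin g hg)⟩

section Domination

variable {G : TGraph V} {Q : List (TEdge V)} {f : TEdge V}

lemma domSelf_singleton (hf : f ∈ G.edges)
    (hmin : ∀ g ∈ G.edges, g.tail = f.tail → g.head = f.head → g.dep = f.dep → f.arr ≤ g.arr) :
    DomSelf G [f] := by
  refine ⟨trp_singleton_iff.2 hf, fun q hq _ hroute hdep => ?_⟩
  have hlen := congrArg List.length hroute
  rw [length_routeOf hq.1, routeOf_singleton] at hlen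
  obtain ⟨g, rfl⟩ := List.length_eq_one_iff.1 (by simpa using hlen)
  simp only [routeOf_singleton, List.cons.injEq, and_true] at hroute
  simpa [parr] using
    hmin g (trp_singleton_iff.1 hq) hroute.1 hroute.2 (by simpa [pdep] using hdep)

lemma DomSelf.append_singleton (hQ : DomSelf G Q) (hQf : TRP G (Q ++ [f]))
    (hmin : ∀ g ∈ G.edges, g.tail = f.tail → g.head = f.head → parr Q ≤ g.dep → f.arr ≤ g.arr) :
    DomSelf G (Q ++ [f]) := by
  have hQne : Q ≠ [] := hQ.1.1
  have hQend : endV Q = some f.tail := ((trp_append_singleton_iff hQne).1 hQf).2.2.1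
  refine ⟨hQf, fun q hq _ hroute hdep => ?_⟩
  obtain ⟨q', g, rfl⟩ := (List.eq_nil_or_concat' q).resolve_left hq.1
  have hq'ne : q' ≠ [] := by
    rintro rfl
    have hlen := congrArg List.length hroute
    rw [length_routeOf hq.1, length_routeOf hQf.1] at hlen
    simp_all
  obtain ⟨hq', hg, hq'end, hq'g⟩ := (trp_append_singleton_iff hq'ne).1 hq
  rw [routeOf_append_singleton hq'end, routeOf_append_singleton hQend] at hroute
  obtain ⟨hroute', hhead⟩ := List.append_inj' hroute rfl
  have htail : g.tail = f.tail := by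
    rw [endV_eq_getLast?_routeOf, hroute', ← endV_eq_getLast?_routeOf, hQend] at hq'end
    exact (Option.some_injective _ hq'end).symm
  rw [pdep_append_singleton hq'ne, pdep_append_singleton hQne] at hdep
  have hQq' : parr Q ≤ parr q' := hQ.2 q' hq'
    (by rw [startV_eq_head?_routeOf, hroute', ← startV_eq_head?_routeOf]) hroute' hdep
  simpa using hmin g hg htail (List.singleton_injective hhead) (hQq'.trans hq'g)

lemma usefulDom_nil : UsefulDom G [] := by
  intro j hj hj'
  rw [List.length_nil] at hj'
  omega

lemma UsefulDom.domSelf (h : UsefulDom G Q) (hQ : Q ≠ []) : DomSelf G Q := by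
  simpa using h Q.length (List.length_pos_iff.2 hQ) le_rfl

lemma UsefulDom.append_singleton (hQ : UsefulDom G Q) (hf : DomSelf G (Q ++ [f])) :
    UsefulDom G (Q ++ [f]) := by
  intro j hj hj'
  rw [List.length_append, List.length_singleton] at hj'
  rcases hj'.lt_or_eq with hlt | rfl
  · rw [List.take_append_of_le_length (by omega)]
    exact hQ j hj (by omega)
  · rwa [List.take_of_length_le (by simp)]

end Domination

theorem exists_usefulDom_of_trp {G : TGraph V} {p : List (TEdge V)} (hp : TRP G p) :
    ∃ Q, TRP G Q ∧ routeOf Q = routeOf p ∧ pdep Q = pdep p ∧ parr Q ≤ parr p ∧ UsefulDom G Q := by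
  induction p using List.reverseRecOn with
  | nil => exact absurd rfl hp.1
  | append_singleton p e ih =>
    rcases eq_or_ne p [] with rfl | hpne
    · obtain ⟨f, ⟨hf, hft, hfh, hfd⟩, hmin⟩ := exists_arr_min
        (S := {g | g ∈ G.edges ∧ g.tail = e.tail ∧ g.head = e.head ∧ g.dep = e.dep})
        ⟨e, trp_singleton_iff.1 hp, rfl, rfl, rfl⟩
      refine ⟨[f], trp_singleton_iff.2 hf, by simp [hft, hfh], by simp [pdep, hfd],
        by simpa [parr] using hmin e ⟨trp_singleton_iff.1 hp, rfl, rfl, rfl⟩,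
        usefulDom_nil.append_singleton (domSelf_singleton hf ?_)⟩
      exact fun g hg hgt hgh hgd => hmin g ⟨hg, hgt.trans hft, hgh.trans hfh, hgd.trans hfd⟩
    · obtain ⟨hpt, he, hpend, hpe⟩ := (trp_append_singleton_iff hpne).1 hp
      obtain ⟨Q, hQ, hroute, hdep, harr, huse⟩ := ih hpt
      have hQne : Q ≠ [] := hQ.1
      have hQend : endV Q = some e.tail := by
        rw [endV_eq_getLast?_routeOf, hroute, ← endV_eq_getLast?_routeOf, hpend]
      obtain ⟨f, ⟨hf, hft, hfh, hfd⟩, hmin⟩ := exists_arr_min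
        (S := {g | g ∈ G.edges ∧ g.tail = e.tail ∧ g.head = e.head ∧ parr Q ≤ g.dep})
        ⟨e, he, rfl, rfl, harr.trans hpe⟩
      have hQf : TRP G (Q ++ [f]) :=
        (trp_append_singleton_iff hQne).2 ⟨hQ, hf, hft ▸ hQend, hfd⟩
      refine ⟨Q ++ [f], hQf, ?_, ?_, by simpa using hmin e ⟨he, rfl, rfl, harr.trans hpe⟩,
        huse.append_singleton ((huse.domSelf hQne).append_singleton hQf ?_)⟩
      · rw [routeOf_append_singleton (hft ▸ hQend), routeOf_append_singleton hpend, hroute, hfh]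
      · rw [pdep_append_singleton hQne, pdep_append_singleton hpne, hdep]
      · exact fun g hg hgt hgh hgd => hmin g ⟨hg, hgt.trans hft, hgh.trans hfh, hgd⟩

theorem stmt0 (G : TGraph V) (s z : V) (r : List V) (t : ℕ)
    (h : ∃ P, P ∈ PathsIn G s z r t) :
    ∃ Q, Q ∈ PathsIn G s z r t ∧ UsefulDom G Q := by
  obtain ⟨P, hP⟩ := h
  obtain ⟨Q, hQ, hroute, hdep, -, huse⟩ := exists_usefulDom_of_trp hP.1
  exact ⟨Q, mem_pathsIn_of_routeOf_eq hP hQ hroute hdep, huse⟩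
end

section
/- Let G be a temporal graph, s a vertex, rt a ready time, and z ≠ s a vertex. The earliest arrival time from s to z with ready time rt equals the minimum of arr(v_e) over all nodes v_e of the ESDG G̃ such that the head of e is z and v_e is reachable in G̃ from some node v_f with tail(f) = s and dep(v_f) ≥ rt (and equals ∞ if no such node exists). -/
variable {V : Type}

/-!
A time-respecting path is a walk in the graph `TRPAdj G` on the edges of `G`, in which `e → f`
whenever `f` may follow `e`; the ESDG is the subgraph of `TRPAdj G` that keeps, among the
parallel edges `f` that may follow `e`, only those arriving earliest. Hence every ESDG walk is a
time-respecting path, and conversely any step `e → b` of a path can be replaced by an ESDG step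
`e → g` with `g` parallel to `b` and arriving no later; inductively, every time-respecting path
is dominated by an ESDG walk from the same first edge to the same vertex, arriving no later.
-/

def TRPAdj (G : TGraph V) (e f : TEdge V) : Prop :=
  e ∈ G.edges ∧ f ∈ G.edges ∧ e.head = f.tail ∧ e.arr ≤ f.dep

def arrivalsVia (G : TGraph V) (R : TEdge V → TEdge V → Prop) (s z : V) (rt : ℕ) : Set ℕ∞ :=
  {a | ∃ e f : TEdge V, f ∈ G.edges ∧ f.tail = s ∧ rt ≤ f.dep ∧
    Relation.ReflTransGen R f e ∧ e.head = z ∧ a = (e.arr : ℕ∞)}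

section Endpoints

variable {p : List (TEdge V)} (hp : p ≠ [])
include hp

lemma startV_eq_some_head : startV p = some (p.head hp).tail := by
  simp [startV, List.head?_eq_some_head hp]

lemma pdep_eq_head_dep : pdep p = (p.head hp).dep := by
  simp [pdep, List.head?_eq_some_head hp]

lemma endV_eq_some_getLast : endV p = some (p.getLast hp).head := by
  simp [endV, List.getLast?_eq_some_getLast hp]

lemma parr_eq_getLast_arr : parr p = (p.getLast hp).arr := by
  simp [parr, List.getLast?_eq_some_getLast hp]

end Endpoints

lemma TRP.reflTransGen_trpAdj {G : TGraph V} {p : List (TEdge V)} (hp : TRP G p) :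
    Relation.ReflTransGen (TRPAdj G) (p.head hp.1) (p.getLast hp.1) := by
  obtain ⟨hne, hmem, hchain⟩ := hp
  refine List.relationReflTransGen_of_exists_isChain p ?_ hne
  exact (List.IsChain.iff_mem.mp hchain).imp fun e f ⟨he, hf, hef⟩ => ⟨hmem e he, hmem f hf, hef⟩

lemma exists_trp_of_reflTransGen_trpAdj {G : TGraph V} {f e : TEdge V} (hf : f ∈ G.edges)
    (h : Relation.ReflTransGen (TRPAdj G) f e) :
    ∃ p, ∃ hp : TRP G p, p.head hp.1 = f ∧ p.getLast hp.1 = e := by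
  obtain ⟨p, hne, hchain, hhead, hlast⟩ := List.exists_isChain_ne_nil_of_relationReflTransGen h
  have hmem : ∀ x ∈ p, x ∈ G.edges :=
    hchain.induction _ p (fun _ _ hxy _ => hxy.2.1) fun _ => hhead ▸ hf
  exact ⟨p, ⟨hne, hmem, hchain.imp fun _ _ hxy => hxy.2.2⟩, hhead, hlast⟩

lemma setOf_trp_arr_eq_arrivalsVia_trpAdj (G : TGraph V) (s z : V) (rt : ℕ) :
    {a : ℕ∞ | ∃ p, TRP G p ∧ startV p = some s ∧ endV p = some z ∧
        rt ≤ pdep p ∧ a = (parr p : ℕ∞)} = arrivalsVia G (TRPAdj G) s z rt := by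
  ext a
  constructor
  · rintro ⟨p, hp, hs, hz, hrt, rfl⟩
    rw [startV_eq_some_head hp.1, Option.some_inj] at hs
    rw [endV_eq_some_getLast hp.1, Option.some_inj] at hz
    rw [pdep_eq_head_dep hp.1] at hrt
    exact ⟨_, _, hp.2.1 _ (List.head_mem hp.1), hs, hrt, hp.reflTransGen_trpAdj, hz,
      by rw [parr_eq_getLast_arr hp.1]⟩
  · rintro ⟨e, f, hf, hs, hrt, hfe, hz, rfl⟩
    obtain ⟨p, hp, rfl, rfl⟩ := exists_trp_of_reflTransGen_trpAdj hf hfe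
    exact ⟨p, hp, by rw [startV_eq_some_head hp.1, hs], by rw [endV_eq_some_getLast hp.1, hz],
      by rwa [pdep_eq_head_dep hp.1], by rw [parr_eq_getLast_arr hp.1]⟩

namespace ESDGAdj

variable {G : TGraph V}

lemma trpAdj {e f : TEdge V} (h : ESDGAdj G e f) : TRPAdj G e f :=
  ⟨h.1, h.2.1, h.2.2.1, h.2.2.2.1⟩

lemma mem_edges_of_reflTransGen {f e : TEdge V} (hf : f ∈ G.edges)
    (h : Relation.ReflTransGen (ESDGAdj G) f e) : e ∈ G.edges := by
  rcases h.cases_tail with rfl | ⟨_, _, hce⟩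
  exacts [hf, hce.2.1]

/-- `g` is an edge of minimal arrival among those parallel to `b` departing no earlier than `e`
arrives. -/
lemma exists_le_of_trpAdj {e b : TEdge V} (h : TRPAdj G e b) :
    ∃ g, ESDGAdj G e g ∧ g.head = b.head ∧ g.arr ≤ b.arr := by
  obtain ⟨he, hb, heb, harr⟩ := h
  obtain ⟨g, ⟨hg, hgt, hgh, hgd⟩, hmin⟩ := (measure TEdge.arr).wf.has_min
    {g | g ∈ G.edges ∧ g.tail = b.tail ∧ g.head = b.head ∧ e.arr ≤ g.dep} ⟨b, hb, rfl, rfl, harr⟩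
  refine ⟨g, ⟨he, hg, heb.trans hgt.symm, hgd, ?_⟩, hgh, ?_⟩
  · rintro ⟨g', hg', hg't, hg'h, hg'd, hlt⟩
    exact hmin g' ⟨hg', hg't.trans hgt, hg'h.trans hgh, hg'd⟩ hlt
  · exact not_lt.mp (hmin b ⟨hb, rfl, rfl, harr⟩)

lemma exists_reflTransGen_le_of_reflTransGen_trpAdj {f b : TEdge V} (hf : f ∈ G.edges)
    (h : Relation.ReflTransGen (TRPAdj G) f b) :
    ∃ e, Relation.ReflTransGen (ESDGAdj G) f e ∧ e.head = b.head ∧ e.arr ≤ b.arr := by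
  induction h with
  | refl => exact ⟨f, .refl, rfl, le_rfl⟩
  | tail _ hab ih =>
    obtain ⟨e, hfe, hhead, harr⟩ := ih
    obtain ⟨g, heg, hgh, hga⟩ := exists_le_of_trpAdj
      ⟨mem_edges_of_reflTransGen hf hfe, hab.2.1, hhead.trans hab.2.2.1, harr.trans hab.2.2.2⟩
    exact ⟨g, hfe.tail heg, hgh, hga⟩

end ESDGAdj

lemma sInf_arrivalsVia_esdgAdj_eq_trpAdj (G : TGraph V) (s z : V) (rt : ℕ) :
    sInf (arrivalsVia G (ESDGAdj G) s z rt) = sInf (arrivalsVia G (TRPAdj G) s z rt) := by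
  apply le_antisymm
  · refine le_sInf ?_
    rintro _ ⟨b, f, hf, hs, hrt, hfb, hz, rfl⟩
    obtain ⟨e, hfe, hhead, harr⟩ := ESDGAdj.exists_reflTransGen_le_of_reflTransGen_trpAdj hf hfb
    exact sInf_le_of_le ⟨e, f, hf, hs, hrt, hfe, hhead.trans hz, rfl⟩ (by exact_mod_cast harr)
  · refine sInf_le_sInf ?_
    rintro _ ⟨e, f, hf, hs, hrt, hfe, hz, rfl⟩
    exact ⟨e, f, hf, hs, hrt, Relation.ReflTransGen.mono (fun _ _ => ESDGAdj.trpAdj) _ _ hfe, hz, rfl⟩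

theorem stmt9_general (G : TGraph V) (s z : V) (rt : ℕ) :
    sInf {a : ℕ∞ | ∃ p, TRP G p ∧ startV p = some s ∧ endV p = some z ∧
        rt ≤ pdep p ∧ a = (parr p : ℕ∞)} =
    sInf {a : ℕ∞ | ∃ e f : TEdge V, f ∈ G.edges ∧ f.tail = s ∧ rt ≤ f.dep ∧
        Relation.ReflTransGen (ESDGAdj G) f e ∧ e.head = z ∧ a = (e.arr : ℕ∞)} := by
  rw [setOf_trp_arr_eq_arrivalsVia_trpAdj]
  exact (sInf_arrivalsVia_esdgAdj_eq_trpAdj G s z rt).symm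

theorem stmt9 (G : TGraph V) (s z : V) (rt : ℕ) (hz : z ≠ s) :
    sInf {a : ℕ∞ | ∃ p, TRP G p ∧ startV p = some s ∧ endV p = some z ∧
        rt ≤ pdep p ∧ a = (parr p : ℕ∞)} =
    sInf {a : ℕ∞ | ∃ e f : TEdge V, f ∈ G.edges ∧ f.tail = s ∧ rt ≤ f.dep ∧
        Relation.ReflTransGen (ESDGAdj G) f e ∧ e.head = z ∧ a = (e.arr : ℕ∞)} :=
  stmt9_general G s z rt
end

section
/- Let G be a temporal graph, s a vertex, and z ≠ s a vertex. The fastest path duration from s to z equals the minimum, over all pairs of nodes (v_f, v_e) of the ESDG G̃ with tail(f) = s, head(e) = z, and v_e reachable from v_f in G̃, of arr(v_e) − dep(v_f) (and equals ∞ if no such pair exists). -/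
variable {V : Type}

/-!
A time-respecting path is a chain of edges each of which can follow the previous one, and an
ESDG path is such a chain in which every edge is the earliest-arriving one among its parallel
edges that are still catchable. So every ESDG path is a time-respecting path with the same
departure and arrival, and conversely any time-respecting path `f, g₁, …, gₖ` can be replaced,
edge by edge, by the ESDG path that keeps `f` and at each step takes the earliest-arriving
catchable parallel edge; by induction it arrives no later. Hence the two infima agree.
-/

namespace TGraph

def Precedes (G : TGraph V) (e f : TEdge V) : Prop :=
  e ∈ G.edges ∧ f ∈ G.edges ∧ e.head = f.tail ∧ e.arr ≤ f.dep

end TGraph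

variable {G : TGraph V}

theorem ESDGAdj.precedes {e f : TEdge V} (h : ESDGAdj G e f) : G.Precedes e f :=
  ⟨h.1, h.2.1, h.2.2.1, h.2.2.2.1⟩

theorem trp_cons_iff {f : TEdge V} {l : List (TEdge V)} :
    TRP G (f :: l) ↔ f ∈ G.edges ∧ (f :: l).IsChain G.Precedes := by
  constructor
  · rintro ⟨-, hmem, hchain⟩
    exact ⟨hmem f List.mem_cons_self,
      hchain.imp_of_mem_imp fun a b ha hb hab => ⟨hmem a ha, hmem b hb, hab⟩⟩
  · rintro ⟨hf, hchain⟩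
    exact ⟨List.cons_ne_nil f l,
      hchain.induction (· ∈ G.edges) _ (fun _ _ h _ => h.2.1) fun _ => hf,
      hchain.imp fun _ _ h => h.2.2⟩

theorem endV_cons (f : TEdge V) (l : List (TEdge V)) :
    endV (f :: l) = some ((f :: l).getLast (List.cons_ne_nil f l)).head := by
  simp only [endV, List.getLast?_eq_some_getLast (List.cons_ne_nil f l), Option.map_some]

theorem parr_cons (f : TEdge V) (l : List (TEdge V)) :
    parr (f :: l) = ((f :: l).getLast (List.cons_ne_nil f l)).arr := by
  simp only [parr, List.getLast?_eq_some_getLast (List.cons_ne_nil f l), Option.elim_some]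

theorem exists_trp_of_reflTransGen_esdgAdj {f e : TEdge V} (hf : f ∈ G.edges)
    (h : Relation.ReflTransGen (ESDGAdj G) f e) :
    ∃ l, TRP G (f :: l) ∧ endV (f :: l) = some e.head ∧ parr (f :: l) = e.arr := by
  obtain ⟨l, hchain, hlast⟩ := List.exists_isChain_cons_of_relationReflTransGen
    (Relation.ReflTransGen.mono (fun _ _ => ESDGAdj.precedes) _ _ h)
  exact ⟨l, trp_cons_iff.2 ⟨hf, hchain⟩, by rw [endV_cons, hlast], by rw [parr_cons, hlast]⟩

theorem exists_esdgAdj_of_precedes {e g : TEdge V} (hg : G.Precedes e g) :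
    ∃ g', ESDGAdj G e g' ∧ g'.head = g.head ∧ g'.arr ≤ g.arr := by
  classical
  let Catchable (a : ℕ) : Prop := ∃ g' ∈ G.edges,
    g'.tail = g.tail ∧ g'.head = g.head ∧ e.arr ≤ g'.dep ∧ g'.arr = a
  have hg_catchable : Catchable g.arr := ⟨g, hg.2.1, rfl, rfl, hg.2.2.2, rfl⟩
  have hex : ∃ a, Catchable a := ⟨_, hg_catchable⟩
  obtain ⟨g', hg', htail, hhead, hdep, harr⟩ := Nat.find_spec hex
  refine ⟨g', ⟨hg.1, hg', hg.2.2.1.trans htail.symm, hdep, ?_⟩, hhead,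
    harr ▸ Nat.find_min' hex hg_catchable⟩
  rintro ⟨g'', hg'', htail', hhead', hdep', hlt⟩
  exact Nat.find_min hex (harr ▸ hlt)
    ⟨g'', hg'', htail'.trans htail, hhead'.trans hhead, hdep', rfl⟩

theorem exists_esdg_reach_of_reflTransGen_precedes {f g : TEdge V} (hf : f ∈ G.edges)
    (h : Relation.ReflTransGen G.Precedes f g) :
    ∃ e ∈ G.edges, Relation.ReflTransGen (ESDGAdj G) f e ∧ e.head = g.head ∧ e.arr ≤ g.arr := by
  induction h with
  | refl => exact ⟨f, hf, .refl, rfl, le_rfl⟩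
  | tail _ hbc ih =>
    obtain ⟨e, he, hfe, hhead, harr⟩ := ih
    obtain ⟨g', hadj, hhead', harr'⟩ := exists_esdgAdj_of_precedes
      ⟨he, hbc.2.1, hhead.trans hbc.2.2.1, harr.trans hbc.2.2.2⟩
    exact ⟨g', hadj.2.1, hfe.tail hadj, hhead', harr'⟩

theorem TRP.exists_esdg_reach {f : TEdge V} {l : List (TEdge V)} (hp : TRP G (f :: l)) :
    ∃ e, Relation.ReflTransGen (ESDGAdj G) f e ∧ endV (f :: l) = some e.head ∧
      e.arr ≤ parr (f :: l) := by
  obtain ⟨hf, hchain⟩ := trp_cons_iff.1 hp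
  obtain ⟨e, -, hfe, hhead, harr⟩ := exists_esdg_reach_of_reflTransGen_precedes hf
    (List.relationReflTransGen_of_exists_isChain_cons l hchain rfl)
  exact ⟨e, hfe, by rw [endV_cons, hhead], by rw [parr_cons]; exact harr⟩

theorem stmt10_general (G : TGraph V) (s z : V) :
    sInf {a : ℕ∞ | ∃ p, TRP G p ∧ startV p = some s ∧ endV p = some z ∧
        a = ((parr p - pdep p : ℕ) : ℕ∞)} =
    sInf {a : ℕ∞ | ∃ f e : TEdge V, f ∈ G.edges ∧ f.tail = s ∧
        Relation.ReflTransGen (ESDGAdj G) f e ∧ e.head = z ∧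
        a = ((e.arr - f.dep : ℕ) : ℕ∞)} := by
  apply le_antisymm
  · refine sInf_le_sInf_of_isCoinitialFor ?_
    rintro _ ⟨f, e, hf, rfl, hfe, rfl, rfl⟩
    obtain ⟨l, hp, hend, harr⟩ := exists_trp_of_reflTransGen_esdgAdj hf hfe
    exact ⟨_, ⟨f :: l, hp, rfl, hend, rfl⟩, by rw [harr, pdep]; rfl⟩
  · refine sInf_le_sInf_of_isCoinitialFor ?_
    rintro _ ⟨_ | ⟨f, l⟩, hp, hs, hz, rfl⟩
    · exact (hp.1 rfl).elim
    obtain ⟨e, hfe, hend, harr⟩ := hp.exists_esdg_reach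
    refine ⟨_, ⟨f, e, (trp_cons_iff.1 hp).1, Option.some_injective _ hs, hfe,
      Option.some_injective _ (hend.symm.trans hz), rfl⟩, ?_⟩
    exact_mod_cast Nat.sub_le_sub_right harr f.dep

theorem stmt10 (G : TGraph V) (s z : V) (hz : z ≠ s) :
    sInf {a : ℕ∞ | ∃ p, TRP G p ∧ startV p = some s ∧ endV p = some z ∧
        a = ((parr p - pdep p : ℕ) : ℕ∞)} =
    sInf {a : ℕ∞ | ∃ f e : TEdge V, f ∈ G.edges ∧ f.tail = s ∧
        Relation.ReflTransGen (ESDGAdj G) f e ∧ e.head = z ∧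
        a = ((e.arr - f.dep : ℕ) : ℕ∞)} :=
  stmt10_general G s z
end

section
/- Let G be a temporal graph, s a vertex, and suppose a fastest path P from s to z exists. Then there exist nodes x and y in the ESDG G̃ with tail(x) = s, head(y) = z, y reachable from x, dep(x) = dep(P), and arr(y) = arr(P); moreover the fastest path duration from s to z equals arr(y) − dep(x). -/
variable {V : Type}

/-!
Walk along the fastest path `P` and replace each edge, greedily, by the parallel edge that
arrives earliest among those still catchable; by construction consecutive replacements are
ESDG-adjacent. The resulting ESDG path starts with the first edge of `P`, ends at `z`, and
arrives no later than `P`. Read back as a time-respecting path it departs when `P` does, so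
fastness of `P` forces equal arrival times.
-/

def TRAdj (G : TGraph V) (e f : TEdge V) : Prop :=
  e ∈ G.edges ∧ f ∈ G.edges ∧ e.head = f.tail ∧ e.arr ≤ f.dep

lemma ESDGAdj.trAdj {G : TGraph V} {e f : TEdge V} (h : ESDGAdj G e f) : TRAdj G e f :=
  ⟨h.1, h.2.1, h.2.2.1, h.2.2.2.1⟩

lemma TRP.reflTransGen_trAdj {G : TGraph V} {p : List (TEdge V)} {x f : TEdge V}
    (hp : TRP G p) (hx : p.head? = some x) (hf : p.getLast? = some f) :
    Relation.ReflTransGen (TRAdj G) x f := by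
  obtain ⟨hne, hmem, hchain⟩ := hp
  have hadj : List.IsChain (TRAdj G) p :=
    hchain.imp_of_mem_imp fun a b ha hb hab => ⟨hmem a ha, hmem b hb, hab⟩
  rw [List.head?_eq_some_head hne, Option.some_inj] at hx
  rw [List.getLast?_eq_some_getLast hne, Option.some_inj] at hf
  exact hx ▸ hf ▸ List.relationReflTransGen_of_exists_isChain p hadj hne

lemma exists_trp_of_reflTransGen_trAdj {G : TGraph V} {x y : TEdge V} (hx : x ∈ G.edges)
    (h : Relation.ReflTransGen (TRAdj G) x y) :
    ∃ q, TRP G q ∧ q.head? = some x ∧ q.getLast? = some y := by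
  obtain ⟨l, hchain, hlast⟩ := List.exists_isChain_cons_of_relationReflTransGen h
  have hmem : ∀ g ∈ l, g ∈ G.edges :=
    hchain.cons_induction (· ∈ G.edges) l (fun _ _ h _ => h.2.1) hx
  refine ⟨x :: l, ⟨List.cons_ne_nil x l, ?_, hchain.imp fun _ _ h => h.2.2⟩, rfl, ?_⟩
  · simpa using ⟨hx, hmem⟩
  · rw [List.getLast?_eq_some_getLast (List.cons_ne_nil x l), hlast]

lemma arr_le_arr_of_reflTransGen_trAdj {G : TGraph V} {x y : TEdge V}
    (h : Relation.ReflTransGen (TRAdj G) x y) : x.arr ≤ y.arr := by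
  induction h with
  | refl => exact le_rfl
  | tail _ hbc ih => exact ih.trans (hbc.2.2.2.trans (G.valid _ hbc.2.1).le)

lemma TRAdj.exists_esdgAdj {G : TGraph V} {e f : TEdge V} (h : TRAdj G e f) :
    ∃ f', ESDGAdj G e f' ∧ f'.head = f.head ∧ f'.arr ≤ f.arr := by
  obtain ⟨he, hf, hef, hle⟩ := h
  -- `f'` arrives earliest among the edges parallel to `f` that depart after `e` arrives.
  obtain ⟨f', ⟨hf', htail, hhead, hdep⟩, hmin⟩ := (InvImage.wf TEdge.arr wellFounded_lt).has_min
    {g | g ∈ G.edges ∧ g.tail = f.tail ∧ g.head = f.head ∧ e.arr ≤ g.dep} ⟨f, hf, rfl, rfl, hle⟩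
  refine ⟨f', ⟨he, hf', hef.trans htail.symm, hdep, ?_⟩, hhead, ?_⟩
  · rintro ⟨g, hg, hgt, hgh, hgd, hga⟩
    exact hmin g ⟨hg, hgt.trans htail, hgh.trans hhead, hgd⟩ hga
  · exact not_lt.mp (hmin f ⟨hf, rfl, rfl, hle⟩)

lemma exists_reflTransGen_esdgAdj_of_reflTransGen_trAdj {G : TGraph V} {x f : TEdge V}
    (hx : x ∈ G.edges) (h : Relation.ReflTransGen (TRAdj G) x f) :
    ∃ y ∈ G.edges, Relation.ReflTransGen (ESDGAdj G) x y ∧ y.head = f.head ∧ y.arr ≤ f.arr := by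
  induction h with
  | refl => exact ⟨x, hx, .refl, rfl, le_rfl⟩
  | tail _ hbc ih =>
    obtain ⟨y, hy, hxy, hyb, hyarr⟩ := ih
    obtain ⟨c', hyc', hc'head, hc'arr⟩ :=
      TRAdj.exists_esdgAdj ⟨hy, hbc.2.1, hyb.trans hbc.2.2.1, hyarr.trans hbc.2.2.2⟩
    exact ⟨c', hyc'.2.1, hxy.tail hyc', hc'head, hc'arr⟩

theorem stmt18 (G : TGraph V) (s z : V) (P : List (TEdge V))
    (hP : FastestPath G s z P) :
    ∃ x y : TEdge V, x ∈ G.edges ∧ x.tail = s ∧ y.head = z ∧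
      Relation.ReflTransGen (ESDGAdj G) x y ∧ x.dep = pdep P ∧ y.arr = parr P ∧
      y.arr - x.dep = parr P - pdep P := by
  obtain ⟨hP, hs, hz, hfastest⟩ := hP
  obtain ⟨x, hPx⟩ : ∃ x, P.head? = some x := ⟨_, List.head?_eq_some_head hP.1⟩
  obtain ⟨f, hPf⟩ : ∃ f, P.getLast? = some f := ⟨_, List.getLast?_eq_some_getLast hP.1⟩
  have hx : x ∈ G.edges := hP.2.1 x (List.mem_of_head? hPx)
  have hxf := hP.reflTransGen_trAdj hPx hPf
  obtain ⟨y, -, hxy, hyf, hyarr⟩ := exists_reflTransGen_esdgAdj_of_reflTransGen_trAdj hx hxf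
  have hxy' : Relation.ReflTransGen (TRAdj G) x y :=
    Relation.ReflTransGen.mono (fun _ _ => ESDGAdj.trAdj) _ _ hxy
  obtain ⟨q, hq, hqx, hqy⟩ := exists_trp_of_reflTransGen_trAdj hx hxy'
  have hq_fast := hfastest q hq
  simp only [startV, endV, pdep, parr, hPx, hPf, hqx, hqy, Option.map_some, Option.elim_some,
    Option.some_inj] at hs hz hq_fast ⊢
  -- needed because `hq_fast` compares truncated differences
  have hxarr : x.dep < f.arr := (G.valid x hx).trans_le (arr_le_arr_of_reflTransGen_trAdj hxf)
  have hyf_arr : y.arr = f.arr := by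
    have := hq_fast hs (hyf.trans hz)
    omega
  exact ⟨x, y, hx, hs, hyf.trans hz, hxy, rfl, hyf_arr, by rw [hyf_arr]⟩
end

section
/- In a temporal graph G, if P is a dominating path in ℙ(s,z,r,t) and P' is its prefix on the first j edges, then replacing P' by any useful dominating path Q in ℙ(s, u_{j+1}, r', t) on the same route r' as P' yields a time-respecting path from s to z through r departing at t that is still dominating in ℙ(s,z,r,t). -/
variable {V : Type}

/-! Since `Q` is useful, `Q` itself is dominating for its own route and departure time, and the
prefix `P'` competes with it there, so `arr Q ≤ arr P'`: the rest of `P` can still be boarded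
after `Q`. The new path has the start, route and departure time of `P` and arrives no later,
so it is again dominating. -/

namespace TemporalPath

variable {G : TGraph V} {p q d : List (TEdge V)}

lemma ne_nil_of_endV_eq_some {w : V} (h : endV p = some w) : p ≠ [] := by
  rintro rfl
  simp [endV] at h

lemma routeOf_eq_map_tail_append : routeOf p = p.map TEdge.tail ++ (endV p).toList := by
  unfold routeOf endV
  cases p.getLast? <;> rfl

lemma endV_eq_getLast?_routeOf : endV p = (routeOf p).getLast? := by
  rw [routeOf_eq_map_tail_append]
  cases h : endV p with
  | none => simp [List.getLast?_eq_none_iff.1 (Option.map_eq_none_iff.1 h)]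
  | some w => simp

lemma endV_eq_of_routeOf_eq (h : routeOf q = routeOf p) : endV q = endV p := by
  rw [endV_eq_getLast?_routeOf, h, ← endV_eq_getLast?_routeOf]

lemma startV_append_of_ne_nil (hq : q ≠ []) : startV (q ++ d) = startV q := by
  simp only [startV, List.head?_append_of_ne_nil q hq]

lemma pdep_append_of_ne_nil (hq : q ≠ []) : pdep (q ++ d) = pdep q := by
  simp only [pdep, List.head?_append_of_ne_nil q hq]

lemma endV_append : endV (p ++ d) = (endV d).or (endV p) := by
  simp only [endV, List.getLast?_append]
  cases d.getLast? <;> rfl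

lemma routeOf_append_congr (h : routeOf q = routeOf p) : routeOf (q ++ d) = routeOf (p ++ d) := by
  have hend := endV_eq_of_routeOf_eq h
  have htail : q.map TEdge.tail = p.map TEdge.tail := by
    rw [routeOf_eq_map_tail_append, routeOf_eq_map_tail_append, hend] at h
    exact List.append_cancel_right h
  rw [routeOf_eq_map_tail_append, routeOf_eq_map_tail_append, List.map_append, List.map_append,
    htail, endV_append, endV_append, hend]

lemma parr_append_le_parr_append (h : parr q ≤ parr p) : parr (q ++ d) ≤ parr (p ++ d) := by
  rcases d.eq_nil_or_concat with rfl | ⟨d, e, rfl⟩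
  · simpa using h
  · simp [parr, ← List.append_assoc]

lemma trp_of_append_left (h : TRP G (p ++ d)) (hp : p ≠ []) : TRP G p :=
  ⟨hp, fun e he => h.2.1 e (List.mem_append_left d he), (List.isChain_append.1 h.2.2).1⟩

lemma trp_append_of_parr_le (hpd : TRP G (p ++ d)) (hq : TRP G q) (hend : endV q = endV p)
    (hle : parr q ≤ parr p) : TRP G (q ++ d) := by
  obtain ⟨-, hmem, hchain⟩ := hpd
  obtain ⟨hq, hqmem, hqchain⟩ := hq
  obtain ⟨-, hdchain, hjoin⟩ := List.isChain_append.1 hchain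
  refine ⟨by simp [hq], ?_, List.isChain_append.2 ⟨hqchain, hdchain, ?_⟩⟩
  · intro e he
    rcases List.mem_append.1 he with he | he
    · exact hqmem e he
    · exact hmem e (List.mem_append_right p he)
  · intro x hx y hy
    rw [Option.mem_def] at hx
    obtain ⟨x₀, hx₀, hhead⟩ : ∃ x₀, p.getLast? = some x₀ ∧ x₀.head = x.head := by
      rw [← Option.map_eq_some_iff, ← endV, ← hend, endV, hx, Option.map_some]
    have hparr : x.arr ≤ x₀.arr := by simpa [parr, hx, hx₀] using hle
    obtain ⟨hlink, htime⟩ := hjoin x₀ hx₀ y hy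
    exact ⟨hhead ▸ hlink, hparr.trans htime⟩

lemma UsefulDom.domSelf (h : UsefulDom G q) (hq : q ≠ []) : DomSelf G q := by
  simpa using h q.length (List.length_pos_iff.2 hq) le_rfl

lemma DomSelf.dominatingIn {s z : V} {r : List V} {t : ℕ} (h : DomSelf G q)
    (hq : q ∈ PathsIn G s z r t) : DominatingIn G s z r t q := by
  obtain ⟨-, hs, hz, hr, ht⟩ := hq
  refine ⟨⟨h.1, hs, hz, hr, ht⟩, ?_⟩
  rintro q' ⟨hq', hs', -, hr', ht'⟩
  exact h.2 q' hq' (hs'.trans hs.symm) (hr'.trans hr.symm) (ht'.trans ht.symm)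

lemma mem_pathsIn_of_append {s z w : V} {r : List V} {t : ℕ} (h : p ++ d ∈ PathsIn G s z r t)
    (hw : endV p = some w) : p ∈ PathsIn G s w (routeOf p) t := by
  have hp := ne_nil_of_endV_eq_some hw
  obtain ⟨htrp, hs, -, -, ht⟩ := h
  rw [startV_append_of_ne_nil hp] at hs
  rw [pdep_append_of_ne_nil hp] at ht
  exact ⟨trp_of_append_left htrp hp, hs, hw, rfl, ht⟩

lemma append_mem_pathsIn_of_parr_le {s z w : V} {r : List V} {t : ℕ}
    (hpd : p ++ d ∈ PathsIn G s z r t) (hq : q ∈ PathsIn G s w (routeOf p) t)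
    (hle : parr q ≤ parr p) : q ++ d ∈ PathsIn G s z r t := by
  obtain ⟨hpdtrp, -, hz, hr, -⟩ := hpd
  obtain ⟨hqtrp, hs, -, hqr, ht⟩ := hq
  have hend := endV_eq_of_routeOf_eq hqr
  refine ⟨trp_append_of_parr_le hpdtrp hqtrp hend hle, ?_, ?_, ?_, ?_⟩
  · rwa [startV_append_of_ne_nil hqtrp.1]
  · rwa [endV_append, hend, ← endV_append]
  · rwa [routeOf_append_congr hqr]
  · rwa [pdep_append_of_ne_nil hqtrp.1]

end TemporalPath

open TemporalPath in
theorem stmt19_general (G : TGraph V) (s z : V) (r : List V) (t : ℕ)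
    (P : List (TEdge V)) (hP : DominatingIn G s z r t P)
    (j : ℕ)
    (z' : V) (hz' : endV (P.take j) = some z')
    (Q : List (TEdge V))
    (hQ : Q ∈ PathsIn G s z' (routeOf (P.take j)) t)
    (hQU : UsefulDom G Q) :
    (Q ++ P.drop j) ∈ PathsIn G s z r t ∧
      DominatingIn G s z r t (Q ++ P.drop j) := by
  rw [← List.take_append_drop j P] at hP
  have hP' := mem_pathsIn_of_append hP.1 hz'
  have hle : parr Q ≤ parr (P.take j) := ((hQU.domSelf hQ.1.1).dominatingIn hQ).2 _ hP'
  have hmem := append_mem_pathsIn_of_parr_le hP.1 hQ hle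
  exact ⟨hmem, hmem, fun q hq => (parr_append_le_parr_append hle).trans (hP.2 q hq)⟩

theorem stmt19 (G : TGraph V) (s z : V) (r : List V) (t : ℕ)
    (P : List (TEdge V)) (hP : DominatingIn G s z r t P)
    (j : ℕ) (hj1 : 1 ≤ j) (hj2 : j ≤ P.length)
    (z' : V) (hz' : endV (P.take j) = some z')
    (Q : List (TEdge V))
    (hQ : Q ∈ PathsIn G s z' (routeOf (P.take j)) t)
    (hQU : UsefulDom G Q) :
    (Q ++ P.drop j) ∈ PathsIn G s z r t ∧
      DominatingIn G s z r t (Q ++ P.drop j) :=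
  stmt19_general G s z r t P hP j z' hz' Q hQ hQU
end
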